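/- Monotonicity of the MBS threshold (Theorem 1, Property 2, second part): let V : 𝒬 → ℝ be monotone and let u* ∈ 𝒰 satisfy u*_0 = m for some content m ∈ M_0. If two partial states Q¹_{−0,−m} and Q²_{−0,−m} (coordinates of I other than (0,m)) satisfy Q¹_{n,m} ≥ Q²_{n,m} for every n ∈ N_m and agree on all other coordinates, then φ_{u*}⁻(Q¹_{−0,−m}) ≤ φ_{u*}⁻(Q²_{−0,−m}) (in {0,…,N_{0,m}} ∪ {+∞}); i.e., the MBS scheduling threshold φ_{u*}⁻(Q_{−0,−m}) is monotonically non-increasing in Q_{n,m} for every n ∈ N_m. -/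

import Mathlib

open Finset

namespace HetNet

/-- The queue index set `I = {(n,m) : 0 ≤ n ≤ N, m ∈ M_n}`. -/
abbrev Idx {N M : ℕ} (cache : Fin (N + 1) → Finset (Fin M)) : Type :=
  {p : Fin (N + 1) × Fin M // p.2 ∈ cache p.1}

/-- The feasible action space `𝒰`: each BS schedules a cached content or idles (`none`),
and the MBS (BS `0`) and the SBSs do not operate concurrently. -/
def Feasible {N M : ℕ} (cache : Fin (N + 1) → Finset (Fin M))
    (u : Fin (N + 1) → Option (Fin M)) : Prop :=
  (∀ n m, u n = some m → m ∈ cache n) ∧ (u 0 ≠ none → ∀ n, n ≠ 0 → u n = none)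

instance {N M : ℕ} (cache : Fin (N + 1) → Finset (Fin M)) :
    DecidablePred (Feasible cache) := by
  intro u; unfold Feasible; infer_instance

instance {N M : ℕ} (cache : Fin (N + 1) → Finset (Fin M)) :
    Nonempty {u : Fin (N + 1) → Option (Fin M) // Feasible cache u} :=
  ⟨⟨fun _ => none, ⟨fun _ _ h => (nomatch h), fun h => absurd rfl h⟩⟩⟩

/-- Queue `(n,m)` is served by action `u`. -/
def Served {N M : ℕ} (u : Fin (N + 1) → Option (Fin M)) (n : Fin (N + 1)) (m : Fin M) : Prop :=
  (n = 0 ∧ u 0 = some m) ∨ (n ≠ 0 ∧ (u 0 = some m ∨ u n = some m))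

instance {N M : ℕ} (u : Fin (N + 1) → Option (Fin M)) (n : Fin (N + 1)) (m : Fin M) :
    Decidable (Served u n m) := by unfold Served; infer_instance

/-- The queue transition map `T(Q,u,A)`. -/
def T {N M : ℕ} {cache : Fin (N + 1) → Finset (Fin M)} (bound : Idx cache → ℕ)
    (Q : Idx cache → ℕ) (u : Fin (N + 1) → Option (Fin M)) (A : Idx cache → ℕ) :
    Idx cache → ℕ := fun i =>
  if Served u i.val.1 i.val.2 then min (A i) (bound i) else min (Q i + A i) (bound i)

/-- The network power cost `p(u) = Σ_n p(n, u_n)` (with `p(n,0) = 0` for an idling BS). -/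
def pcost {N M : ℕ} (p : Fin (N + 1) → Fin M → ℝ) (u : Fin (N + 1) → Option (Fin M)) : ℝ :=
  ∑ n, (u n).elim 0 (p n)

/-- The sum request queue length `d(Q)`. -/
def dcost {N M : ℕ} {cache : Fin (N + 1) → Finset (Fin M)} (Q : Idx cache → ℕ) : ℝ :=
  ∑ i, (Q i : ℝ)

/-- The per-stage cost `g(Q,u) = d(Q) + w·p(u)`. -/
def gcost {N M : ℕ} (p : Fin (N + 1) → Fin M → ℝ) (w : ℝ)
    {cache : Fin (N + 1) → Finset (Fin M)}
    (Q : Idx cache → ℕ) (u : Fin (N + 1) → Option (Fin M)) : ℝ :=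
  dcost Q + w * pcost p u

/-- The state-action cost `J_V(Q,u) = g(Q,u) + Σ_{A∈𝒜} P(A)·V(T(Q,u,A))`. -/
def Jcost {N M : ℕ} (p : Fin (N + 1) → Fin M → ℝ) (w : ℝ)
    {cache : Fin (N + 1) → Finset (Fin M)} (bound : Idx cache → ℕ)
    {ι : Type} [Fintype ι] (P : ι → ℝ) (A : ι → Idx cache → ℕ)
    (V : (Idx cache → ℕ) → ℝ) (Q : Idx cache → ℕ)
    (u : Fin (N + 1) → Option (Fin M)) : ℝ :=
  gcost p w Q u + ∑ a, P a * V (T bound Q u (A a))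

open scoped Classical in
/-- `Φ_u(Q_{−n,−m})`: the set of queue lengths `q ∈ {0,…,N_{n,m}}` at coordinate `i = (n,m)`
such that action `u` dominates every other feasible action at the state obtained from `Q`
by replacing its `(n,m)`-coordinate with `q`.  Its `Finset.max` (valued in `WithBot ℕ`,
`⊥` = −∞) is `φ_u⁺(Q_{−n,−m})`, and its `Finset.min` (valued in `WithTop ℕ`, `⊤` = +∞)
is `φ_u⁻(Q_{−n,−m})`. -/
noncomputable def Phi {N M : ℕ} (p : Fin (N + 1) → Fin M → ℝ) (w : ℝ)
    {cache : Fin (N + 1) → Finset (Fin M)} (bound : Idx cache → ℕ)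
    {ι : Type} [Fintype ι] (P : ι → ℝ) (A : ι → Idx cache → ℕ)
    (V : (Idx cache → ℕ) → ℝ) (u : Fin (N + 1) → Option (Fin M))
    (i : Idx cache) (Q : Idx cache → ℕ) : Finset ℕ :=
  (Finset.range (bound i + 1)).filter fun q =>
    ∀ v, Feasible cache v → v ≠ u →
      Jcost p w bound P A V (Function.update Q i q) u -
        Jcost p w bound P A V (Function.update Q i q) v ≤ 0

/-!
Raising the SBS queues `(n,m)`, `n ∈ N_m`, does not change the next state under an action
`u*` with `u*_0 = m`, since the MBS broadcast of `m` empties all of them, while under any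
other action `v` the next state can only grow. By monotonicity of `V`, the advantage
`J_V(Q,u*) − J_V(Q,v)` therefore decreases, so `Φ_{u*}` grows and its minimum decreases.
-/

section Transition

variable {N M : ℕ} {cache : Fin (N + 1) → Finset (Fin M)} (bound : Idx cache → ℕ)

theorem T_le_bound (Q : Idx cache → ℕ) (u : Fin (N + 1) → Option (Fin M))
    (A : Idx cache → ℕ) (i : Idx cache) : T bound Q u A i ≤ bound i := by
  unfold T
  split <;> exact min_le_right _ _

theorem T_mono {Q Q' : Idx cache → ℕ} (hQ : Q ≤ Q') (u : Fin (N + 1) → Option (Fin M))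
    (A : Idx cache → ℕ) : T bound Q u A ≤ T bound Q' u A := fun i => by
  unfold T
  split
  · exact le_rfl
  · exact min_le_min_right _ (Nat.add_le_add_right (hQ i) _)

theorem T_congr_of_eq_of_not_served {Q Q' : Idx cache → ℕ} {u : Fin (N + 1) → Option (Fin M)}
    (hQ : ∀ i : Idx cache, ¬Served u i.val.1 i.val.2 → Q i = Q' i) (A : Idx cache → ℕ) :
    T bound Q u A = T bound Q' u A := funext fun i => by
  unfold T
  split
  · rfl
  · rw [hQ i ‹_›]

theorem served_of_MBS_eq {u : Fin (N + 1) → Option (Fin M)} {m : Fin M} (hu : u 0 = some m)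
    (n : Fin (N + 1)) : Served u n m := by
  by_cases hn : n = 0
  · exact Or.inl ⟨hn, hu⟩
  · exact Or.inr ⟨hn, Or.inl hu⟩

end Transition

section Advantage

variable {N M : ℕ} {cache : Fin (N + 1) → Finset (Fin M)} (bound : Idx cache → ℕ)
  (p : Fin (N + 1) → Fin M → ℝ) (w : ℝ) {ι : Type} [Fintype ι] (P : ι → ℝ)
  (A : ι → Idx cache → ℕ) (V : (Idx cache → ℕ) → ℝ)

theorem Jcost_sub_Jcost_le_of_le (hP : ∀ a, 0 ≤ P a)
    (hV : ∀ Q₁ Q₂ : Idx cache → ℕ, (∀ i, Q₁ i ≤ bound i) → (∀ i, Q₂ i ≤ bound i) →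
      (∀ i, Q₁ i ≤ Q₂ i) → V Q₁ ≤ V Q₂)
    {Q Q' : Idx cache → ℕ} {u : Fin (N + 1) → Option (Fin M)} (hle : Q ≤ Q')
    (heq : ∀ i : Idx cache, ¬Served u i.val.1 i.val.2 → Q i = Q' i)
    (v : Fin (N + 1) → Option (Fin M)) :
    Jcost p w bound P A V Q' u - Jcost p w bound P A V Q' v ≤
      Jcost p w bound P A V Q u - Jcost p w bound P A V Q v := by
  have hu : ∑ a, P a * V (T bound Q u (A a)) = ∑ a, P a * V (T bound Q' u (A a)) :=
    Finset.sum_congr rfl fun a _ => by rw [T_congr_of_eq_of_not_served bound heq]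
  have hv : ∑ a, P a * V (T bound Q v (A a)) ≤ ∑ a, P a * V (T bound Q' v (A a)) :=
    Finset.sum_le_sum fun a _ => mul_le_mul_of_nonneg_left
      (hV _ _ (T_le_bound bound _ v _) (T_le_bound bound _ v _) (T_mono bound hle v _)) (hP a)
  unfold Jcost gcost
  linarith

theorem Phi_subset_Phi {u : Fin (N + 1) → Option (Fin M)} {i : Idx cache}
    {Q Q' : Idx cache → ℕ}
    (h : ∀ q v, Feasible cache v →
      Jcost p w bound P A V (Function.update Q' i q) u -
          Jcost p w bound P A V (Function.update Q' i q) v ≤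
        Jcost p w bound P A V (Function.update Q i q) u -
          Jcost p w bound P A V (Function.update Q i q) v) :
    Phi p w bound P A V u i Q ⊆ Phi p w bound P A V u i Q' := by
  intro q hq
  simp only [Phi, Finset.mem_filter] at hq ⊢
  exact ⟨hq.1, fun v hv hne => (h q v hv).trans (hq.2 v hv hne)⟩

end Advantage

theorem optimal_MBS_threshold_monotone_general {N M : ℕ} (cache : Fin (N + 1) → Finset (Fin M))
    (hcache0 : ∀ m : Fin M, m ∈ cache 0)
    (bound : Idx cache → ℕ)
    (p : Fin (N + 1) → Fin M → ℝ)
    (w : ℝ)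
    {ι : Type} [Fintype ι] (P : ι → ℝ) (A : ι → Idx cache → ℕ)
    (hP : ∀ a, 0 ≤ P a)
    (V : (Idx cache → ℕ) → ℝ)
    (hV : ∀ Q₁ Q₂ : Idx cache → ℕ, (∀ i, Q₁ i ≤ bound i) → (∀ i, Q₂ i ≤ bound i) →
      (∀ i, Q₁ i ≤ Q₂ i) → V Q₁ ≤ V Q₂)
    (ustar : Fin (N + 1) → Option (Fin M))
    (m : Fin M) (hu0 : ustar 0 = some m)
    (Q₁ Q₂ : Idx cache → ℕ)
    (hge : ∀ i : Idx cache, i.val.1 ≠ 0 → i.val.2 = m → Q₂ i ≤ Q₁ i)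
    (heq : ∀ i : Idx cache, i.val ≠ ((0 : Fin (N + 1)), m) →
      ¬(i.val.1 ≠ 0 ∧ i.val.2 = m) → Q₁ i = Q₂ i) :
    (Phi p w bound P A V ustar ⟨((0 : Fin (N + 1)), m), hcache0 m⟩ Q₁).min ≤
      (Phi p w bound P A V ustar ⟨((0 : Fin (N + 1)), m), hcache0 m⟩ Q₂).min := by
  set i₀ : Idx cache := ⟨((0 : Fin (N + 1)), m), hcache0 m⟩
  have hle : ∀ q, Function.update Q₂ i₀ q ≤ Function.update Q₁ i₀ q := by
    refine fun q => update_le_update_iff.2 ⟨le_rfl, fun i hi => ?_⟩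
    by_cases hm : i.val.2 = m
    · by_cases hn : i.val.1 = 0
      · exact absurd (Subtype.ext (Prod.ext hn hm)) hi
      · exact hge i hn hm
    · exact (heq i (fun h => hm (by rw [h])) (fun h => hm h.2)).ge
  have hagree : ∀ q (i : Idx cache), ¬Served ustar i.val.1 i.val.2 →
      Function.update Q₂ i₀ q i = Function.update Q₁ i₀ q i := by
    intro q i hns
    have hm : i.val.2 ≠ m := fun h => hns (h ▸ served_of_MBS_eq hu0 _)
    have hi : i ≠ i₀ := fun h => hm (by rw [h])
    rw [Function.update_of_ne hi, Function.update_of_ne hi]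
    exact (heq i (fun h => hm (by rw [h])) (fun h => hm h.2)).symm
  exact Finset.min_mono <| Phi_subset_Phi bound p w P A V fun q v _ =>
    Jcost_sub_Jcost_le_of_le bound p w P A V hP hV (hle q) (hagree q) v

/-- Theorem 1, Property 2, second part: monotonicity of the MBS threshold:
let `V` be monotone and `u* ∈ 𝒰` with `u*_0 = m ∈ M_0`.  If the partial states `Q¹_{−0,−m}`
and `Q²_{−0,−m}` satisfy `Q¹_{n,m} ≥ Q²_{n,m}` for every `n ∈ N_m` and agree on all other
coordinates, then `φ_{u*}⁻(Q¹_{−0,−m}) ≤ φ_{u*}⁻(Q²_{−0,−m})` in `{0,…,N_{0,m}} ∪ {+∞}`. -/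
theorem optimal_MBS_threshold_monotone {N M : ℕ} (cache : Fin (N + 1) → Finset (Fin M))
    (hcache0 : ∀ m : Fin M, m ∈ cache 0)
    (bound : Idx cache → ℕ)
    (p : Fin (N + 1) → Fin M → ℝ) (hp : ∀ n m, 0 ≤ p n m)
    (w : ℝ) (hw : 0 ≤ w)
    {ι : Type} [Fintype ι] (P : ι → ℝ) (A : ι → Idx cache → ℕ)
    (hP : ∀ a, 0 ≤ P a) (hPsum : ∑ a, P a = 1)
    (V : (Idx cache → ℕ) → ℝ)
    (hV : ∀ Q₁ Q₂ : Idx cache → ℕ, (∀ i, Q₁ i ≤ bound i) → (∀ i, Q₂ i ≤ bound i) →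
      (∀ i, Q₁ i ≤ Q₂ i) → V Q₁ ≤ V Q₂)
    (ustar : Fin (N + 1) → Option (Fin M)) (hustar : Feasible cache ustar)
    (m : Fin M) (hu0 : ustar 0 = some m)
    (Q₁ Q₂ : Idx cache → ℕ)
    (hQ₁ : ∀ i, Q₁ i ≤ bound i) (hQ₂ : ∀ i, Q₂ i ≤ bound i)
    (hge : ∀ i : Idx cache, i.val.1 ≠ 0 → i.val.2 = m → Q₂ i ≤ Q₁ i)
    (heq : ∀ i : Idx cache, i.val ≠ ((0 : Fin (N + 1)), m) →
      ¬(i.val.1 ≠ 0 ∧ i.val.2 = m) → Q₁ i = Q₂ i) :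
    (Phi p w bound P A V ustar ⟨((0 : Fin (N + 1)), m), hcache0 m⟩ Q₁).min ≤
      (Phi p w bound P A V ustar ⟨((0 : Fin (N + 1)), m), hcache0 m⟩ Q₂).min :=
  optimal_MBS_threshold_monotone_general cache hcache0 bound p w P A hP V hV ustar m hu0 Q₁ Q₂ hge
    heq

end HetNet
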